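/- For ρ > 0, the function sending a polynomial Σ aᵢ xⁱ over a nonarchimedean valued field K to sup{|aᵢ| ρⁱ} is a multiplicative nonarchimedean norm on K[x]: it satisfies |fg|_ρ = |f|_ρ · |g|_ρ and |f + g|_ρ ≤ max(|f|_ρ, |g|_ρ). -/

import Mathlib

open Polynomial Finset

/-- The `ρ`-Gauss norm of a polynomial `f = Σ aᵢ xⁱ` over a normed field:
`|f|_ρ = sup_i |aᵢ| ρ^i`. -/
noncomputable def gaussNorm {K : Type*} [NormedField K] (ρ : ℝ) (f : Polynomial K) : ℝ :=
  ⨆ i : ℕ, ‖f.coeff i‖ * ρ ^ i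

section aux

variable {K : Type*} [NormedField K]

lemma nonarch_sum (hna : ∀ a b : K, ‖a + b‖ ≤ max ‖a‖ ‖b‖)
    {ι : Type*} (s : Finset ι) (g : ι → K) (c : ℝ) (hc : 0 ≤ c)
    (h : ∀ i ∈ s, ‖g i‖ ≤ c) : ‖∑ i ∈ s, g i‖ ≤ c := by
  classical
  induction s using Finset.induction_on with
  | empty => simpa using hc
  | insert _ _ ha ih =>
    rw [Finset.sum_insert ha]
    exact le_trans (hna _ _)
      (max_le (h _ (mem_insert_self _ _)) (ih fun i hi => h i (mem_insert_of_mem hi)))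

lemma nonarch_sum_lt (hna : ∀ a b : K, ‖a + b‖ ≤ max ‖a‖ ‖b‖)
    {ι : Type*} (s : Finset ι) (g : ι → K) (c : ℝ) (hc : 0 < c)
    (h : ∀ i ∈ s, ‖g i‖ < c) : ‖∑ i ∈ s, g i‖ < c := by
  classical
  induction s using Finset.induction_on with
  | empty => simpa using hc
  | insert _ _ ha ih =>
    rw [Finset.sum_insert ha]
    exact lt_of_le_of_lt (hna _ _)
      (max_lt (h _ (mem_insert_self _ _)) (ih fun i hi => h i (mem_insert_of_mem hi)))

lemma norm_add_eq_of_lt (hna : ∀ a b : K, ‖a + b‖ ≤ max ‖a‖ ‖b‖)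
    {a b : K} (h : ‖b‖ < ‖a‖) : ‖a + b‖ = ‖a‖ := by
  refine le_antisymm (le_trans (hna a b) (by simp [h.le])) ?_
  have h2 : ‖a‖ ≤ max ‖a + b‖ ‖b‖ := by
    have := hna (a + b) (-b)
    simpa using this
  rcases le_max_iff.mp h2 with h3 | h3
  · exact h3
  · exact absurd h3 (not_le.mpr h)

variable (ρ : ℝ) (hρ : 0 < ρ)

omit hρ in
lemma gaussNorm_bdd (f : Polynomial K) :
    BddAbove (Set.range fun i => ‖f.coeff i‖ * ρ ^ i) := by
  apply Set.Finite.bddAbove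
  apply Set.Finite.subset (Set.Finite.union
    (((Finset.range (f.natDegree + 1)).image fun i => ‖f.coeff i‖ * ρ ^ i).finite_toSet)
    (Set.finite_singleton 0))
  rintro x ⟨i, rfl⟩
  by_cases h : i ≤ f.natDegree
  · left
    simp only [Finset.coe_image, Set.mem_image, Finset.mem_coe, Finset.mem_range]
    exact ⟨i, by omega, rfl⟩
  · right
    simp [Polynomial.coeff_eq_zero_of_natDegree_lt (by omega : f.natDegree < i)]

lemma le_gaussNorm (f : Polynomial K) (i : ℕ) : ‖f.coeff i‖ * ρ ^ i ≤ gaussNorm ρ f :=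
  le_ciSup (gaussNorm_bdd ρ f) i

include hρ

lemma gaussNorm_nonneg (f : Polynomial K) : 0 ≤ gaussNorm ρ f :=
  le_trans (by positivity) (le_gaussNorm ρ f 0)

omit hρ in
lemma gaussNorm_le (f : Polynomial K) (c : ℝ) (h : ∀ i, ‖f.coeff i‖ * ρ ^ i ≤ c) :
    gaussNorm ρ f ≤ c := ciSup_le h

lemma gaussNorm_pos (f : Polynomial K) (hf : f ≠ 0) : 0 < gaussNorm ρ f := by
  have h := le_gaussNorm ρ f f.natDegree
  have h2 : f.coeff f.natDegree ≠ 0 := by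
    have := Polynomial.leadingCoeff_ne_zero.mpr hf
    rwa [Polynomial.leadingCoeff] at this
  calc 0 < ‖f.coeff f.natDegree‖ * ρ ^ f.natDegree :=
        mul_pos (norm_pos_iff.mpr h2) (pow_pos hρ _)
    _ ≤ _ := h

lemma exists_gaussNorm_min (f : Polynomial K) (hf : f ≠ 0) :
    ∃ i, ‖f.coeff i‖ * ρ ^ i = gaussNorm ρ f ∧
      ∀ j < i, ‖f.coeff j‖ * ρ ^ j < gaussNorm ρ f := by
  have hex : ∃ i, ‖f.coeff i‖ * ρ ^ i = gaussNorm ρ f := by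
    have hne : (Finset.range (f.natDegree + 1)).Nonempty := Finset.nonempty_range_iff.mpr (by omega)
    obtain ⟨i, hi, hieq⟩ := Finset.exists_mem_eq_sup' hne (fun i => ‖f.coeff i‖ * ρ ^ i)
    refine ⟨i, le_antisymm (le_gaussNorm ρ f i) ?_⟩
    apply gaussNorm_le ρ
    intro j
    by_cases hj : j ≤ f.natDegree
    · rw [← hieq]
      exact Finset.le_sup' (fun i => ‖f.coeff i‖ * ρ ^ i)
        (Finset.mem_range.mpr (by omega : j < f.natDegree + 1))
    · rw [Polynomial.coeff_eq_zero_of_natDegree_lt (by omega : f.natDegree < j), norm_zero,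
        zero_mul]
      positivity
  classical
  exact ⟨Nat.find hex, Nat.find_spec hex,
    fun j hj => lt_of_le_of_ne (le_gaussNorm ρ f j) (Nat.find_min hex hj)⟩

end aux

/-- For `ρ > 0`, the `ρ`-Gauss norm on `K[x]`, where `K` is a nonarchimedean
valued field, is a multiplicative nonarchimedean norm: `|fg|_ρ = |f|_ρ·|g|_ρ` and
`|f + g|_ρ ≤ max (|f|_ρ, |g|_ρ)`. -/
theorem gaussNorm_mul_and_nonarch {K : Type*} [NormedField K]
    (hna : ∀ a b : K, ‖a + b‖ ≤ max ‖a‖ ‖b‖) (ρ : ℝ) (hρ : 0 < ρ) :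
    (∀ f g : Polynomial K, gaussNorm ρ (f * g) = gaussNorm ρ f * gaussNorm ρ g) ∧
    (∀ f g : Polynomial K, gaussNorm ρ (f + g) ≤ max (gaussNorm ρ f) (gaussNorm ρ g)) := by
  constructor
  · intro f g
    by_cases hf : f = 0
    · simp [hf, _root_.gaussNorm]
    by_cases hg : g = 0
    · simp [hg, _root_.gaussNorm]
    set Nf := gaussNorm ρ f with hNf
    set Ng := gaussNorm ρ g with hNg
    have hNfpos := gaussNorm_pos ρ hρ f hf
    have hNgpos := gaussNorm_pos ρ hρ g hg
    -- upper bound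
    have hub : gaussNorm ρ (f * g) ≤ Nf * Ng := by
      apply gaussNorm_le ρ
      intro n
      rw [Polynomial.coeff_mul]
      rw [← le_div_iff₀ (by positivity : (0:ℝ) < ρ ^ n)]
      apply nonarch_sum hna _ _ _ (by positivity)
      rintro ⟨i, j⟩ hij
      rw [Finset.HasAntidiagonal.mem_antidiagonal] at hij
      rw [le_div_iff₀ (by positivity : (0:ℝ) < ρ ^ n)]
      have h1 : ‖f.coeff i‖ * ρ ^ i ≤ Nf := le_gaussNorm ρ f i
      have h2 : ‖g.coeff j‖ * ρ ^ j ≤ Ng := le_gaussNorm ρ g j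
      calc ‖f.coeff i * g.coeff j‖ * ρ ^ n
          = (‖f.coeff i‖ * ρ ^ i) * (‖g.coeff j‖ * ρ ^ j) := by
            rw [norm_mul, ← hij, pow_add]; ring
        _ ≤ Nf * Ng := mul_le_mul h1 h2 (by positivity) (le_of_lt hNfpos)
    -- lower bound
    obtain ⟨i0, hi0, hi0min⟩ := exists_gaussNorm_min ρ hρ f hf
    obtain ⟨j0, hj0, hj0min⟩ := exists_gaussNorm_min ρ hρ g hg
    set n := i0 + j0 with hn
    have hmem : (i0, j0) ∈ Finset.HasAntidiagonal.antidiagonal n := Finset.HasAntidiagonal.mem_antidiagonal.mpr rfl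
    have hcoeff : (f * g).coeff n =
        f.coeff i0 * g.coeff j0 +
          ∑ p ∈ (Finset.HasAntidiagonal.antidiagonal n).erase (i0, j0), f.coeff p.1 * g.coeff p.2 := by
      rw [Polynomial.coeff_mul, ← Finset.add_sum_erase _ _ hmem]
    have hdom : ‖f.coeff i0 * g.coeff j0‖ = Nf * Ng / ρ ^ n := by
      rw [eq_div_iff (by positivity : (ρ:ℝ) ^ n ≠ 0), norm_mul]
      calc ‖f.coeff i0‖ * ‖g.coeff j0‖ * ρ ^ n
          = (‖f.coeff i0‖ * ρ ^ i0) * (‖g.coeff j0‖ * ρ ^ j0) := by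
            rw [hn, pow_add]; ring
        _ = Nf * Ng := by rw [hi0, hj0]
    have hrest : ‖∑ p ∈ (Finset.HasAntidiagonal.antidiagonal n).erase (i0, j0),
        f.coeff p.1 * g.coeff p.2‖ < Nf * Ng / ρ ^ n := by
      apply nonarch_sum_lt hna _ _ _ (by positivity)
      rintro ⟨i, j⟩ hij
      have hne := Finset.ne_of_mem_erase hij
      have hij' : i + j = n := Finset.HasAntidiagonal.mem_antidiagonal.mp (Finset.mem_of_mem_erase hij)
      rw [lt_div_iff₀ (by positivity : (0:ℝ) < ρ ^ n)]
      have key : (‖f.coeff i‖ * ρ ^ i) * (‖g.coeff j‖ * ρ ^ j) < Nf * Ng := by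
        rcases lt_trichotomy i i0 with h | h | h
        · have h1 : ‖f.coeff i‖ * ρ ^ i < Nf := hi0min i h
          calc (‖f.coeff i‖ * ρ ^ i) * (‖g.coeff j‖ * ρ ^ j)
              ≤ (‖f.coeff i‖ * ρ ^ i) * Ng :=
                mul_le_mul_of_nonneg_left (le_gaussNorm ρ g j) (by positivity)
            _ < Nf * Ng := by exact mul_lt_mul_of_pos_right h1 hNgpos
        · exfalso; apply hne; have : j = j0 := by omega
          simp [h, this]
        · have hj : j < j0 := by omega
          have h2 : ‖g.coeff j‖ * ρ ^ j < Ng := hj0min j hj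
          calc (‖f.coeff i‖ * ρ ^ i) * (‖g.coeff j‖ * ρ ^ j)
              ≤ Nf * (‖g.coeff j‖ * ρ ^ j) :=
                mul_le_mul_of_nonneg_right (le_gaussNorm ρ f i) (by positivity)
            _ < Nf * Ng := by exact mul_lt_mul_of_pos_left h2 hNfpos
      calc ‖f.coeff i * g.coeff j‖ * ρ ^ n
          = (‖f.coeff i‖ * ρ ^ i) * (‖g.coeff j‖ * ρ ^ j) := by
            rw [norm_mul, ← hij', pow_add]; ring
        _ < Nf * Ng := key
    have hcn : ‖(f * g).coeff n‖ = Nf * Ng / ρ ^ n := by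
      rw [hcoeff, norm_add_eq_of_lt hna (hdom ▸ hrest), hdom]
    have hlb : Nf * Ng ≤ gaussNorm ρ (f * g) := by
      have := le_gaussNorm ρ (f * g) n
      rw [hcn, div_mul_cancel₀] at this
      · exact this
      · positivity
    exact le_antisymm hub hlb
  · intro f g
    apply gaussNorm_le ρ
    intro i
    rw [Polynomial.coeff_add]
    calc ‖f.coeff i + g.coeff i‖ * ρ ^ i
        ≤ max ‖f.coeff i‖ ‖g.coeff i‖ * ρ ^ i :=
          mul_le_mul_of_nonneg_right (hna _ _) (by positivity)
      _ = max (‖f.coeff i‖ * ρ ^ i) (‖g.coeff i‖ * ρ ^ i) := by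
          rw [max_mul_of_nonneg _ _ (by positivity : (0:ℝ) ≤ ρ ^ i)]
      _ ≤ max (gaussNorm ρ f) (gaussNorm ρ g) :=
          max_le_max (le_gaussNorm ρ f i) (le_gaussNorm ρ g i)
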